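/- Let r ≥ 2, n, t ≥ 1, and let G be a graph on rn + t vertices such that every collection of r+1 pairwise disjoint vertex sets of size ⌊t/(r+1)⌋ spans a copy of K_{r+1} (i.e., there exist vertices v_1, ..., v_{r+1}, one in each set, pairwise adjacent in G). Then G → (K_{r+1}, P_n): every red-blue colouring of E(G) contains a blue copy of K_{r+1} or a red path with n edges. -/

import Mathlib

open SimpleGraph Finset

/-- The colouring `c` (with `true` = red) contains a red path with `n` edges in `G`. -/
def RedPathLen {V : Type*} (G : SimpleGraph V) (c : Sym2 V → Bool) (n : ℕ) : Prop :=
  ∃ (u v : V) (p : G.Walk u v), p.IsPath ∧ p.length = n ∧ ∀ e ∈ p.edges, c e = true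

/-- The colouring `c` (with `false` = blue) contains a blue copy of `K_m` in `G`. -/
def BlueClique {V : Type*} (G : SimpleGraph V) (c : Sym2 V → Bool) (m : ℕ) : Prop :=
  ∃ f : Fin m ↪ V, ∀ i j : Fin m, i ≠ j → G.Adj (f i) (f j) ∧ c s(f i, f j) = false

/-!
Run a depth-first search in the red graph `R`. Its stack is always a red path, so it holds at
most `n` vertices, and a vertex is finished only once it has no unvisited red neighbour. Stopping
as soon as `t'` vertices are finished therefore splits any vertex set `W` into a set of size `t'`,
at most `n` stack vertices, and at least `|W| - t' - n` unvisited vertices, with no red edge between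
the finished and the unvisited ones. Repeating this `r + 1` times inside `rn + t` vertices yields
`r + 1` disjoint sets of size `t' = ⌊t/(r+1)⌋` with no red edge between any two of them. By
hypothesis they span a `K_{r+1}` of `G`, and all its edges are blue.

Two sets with no red edge between them are encoded as `Rᶜ.IsCompleteBetween s t`, which also
forces them to be disjoint.
-/

open Function in
theorem Pairwise.fin_cons {α : Type*} {r : α → α → Prop} [Std.Symm r] {k : ℕ} {a : α}
    {f : Fin k → α} (ha : ∀ i, r a (f i)) (hf : Pairwise (r on f)) :
    Pairwise (r on (Fin.cons a f : Fin (k + 1) → α)) := by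
  intro i j hij
  cases i using Fin.cases <;> cases j using Fin.cases
  · exact absurd rfl hij
  · exact ha _
  · exact symm (ha _)
  · exact hf fun h => hij (congrArg Fin.succ h)

namespace SimpleGraph

variable {V : Type*} {R : SimpleGraph V} {n : ℕ}

theorem length_le_of_isChain_of_nodup (hR : ∀ u v (p : R.Walk u v), p.IsPath → p.length ≠ n)
    {l : List V} (hc : l.IsChain R.Adj) (hl : l.Nodup) : l.length ≤ n := by
  by_contra! hlt
  have hne : l.take (n + 1) ≠ [] := List.ne_nil_of_length_pos (by rw [List.length_take]; omega)
  refine hR _ _ (Walk.ofSupport _ hne (hc.take _)) ?_ ?_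
  · rw [Walk.isPath_def, Walk.support_ofSupport]
    exact hl.sublist (List.take_sublist _ _)
  · simp only [Walk.length_ofSupport, List.length_take]
    omega

variable [DecidableEq V] (R)

/-- A state of a depth-first search in `R` on the vertex set `W`: `T` is the set of finished
vertices, `l` the stack (its head is the current vertex) and `U` the set of unvisited vertices. -/
structure IsDFSState (W T U : Finset V) (l : List V) : Prop where
  isChain : l.IsChain R.Adj
  nodup : l.Nodup
  finished_subset : T ⊆ W
  unvisited_subset : U ⊆ W
  mem_stack : ∀ x ∈ l, x ∈ W ∧ x ∉ T ∧ x ∉ U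
  card_add_length_add_card : #T + l.length + #U = #W
  isCompleteBetween_compl : Rᶜ.IsCompleteBetween T U

variable {R} {W T U : Finset V} {l : List V} {u v : V}

theorem IsDFSState.push (h : R.IsDFSState W T U l) (hu : u ∈ U)
    (hadj : ∀ w ∈ l.head?, R.Adj u w) : R.IsDFSState W T (U.erase u) (u :: l) where
  isChain := h.isChain.cons hadj
  nodup := List.nodup_cons.2 ⟨fun hl => (h.mem_stack u hl).2.2 hu, h.nodup⟩
  finished_subset := h.finished_subset
  unvisited_subset := (erase_subset _ _).trans h.unvisited_subset
  mem_stack x hx := by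
    obtain rfl | hx := List.mem_cons.1 hx
    · exact ⟨h.unvisited_subset hu, fun hT => (h.isCompleteBetween_compl hT hu).ne rfl,
        notMem_erase _ _⟩
    · obtain ⟨hW, hT, hU⟩ := h.mem_stack x hx
      exact ⟨hW, hT, fun hU' => hU (mem_of_mem_erase hU')⟩
  card_add_length_add_card := by
    have := h.card_add_length_add_card
    have := card_pos.2 ⟨u, hu⟩
    rw [card_erase_of_mem hu, List.length_cons]
    omega
  isCompleteBetween_compl _ hx _ hy := h.isCompleteBetween_compl hx (mem_of_mem_erase hy)

theorem IsDFSState.pop (h : R.IsDFSState W T U (v :: l)) (hv : ∀ u ∈ U, ¬R.Adj v u) :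
    R.IsDFSState W (insert v T) U l where
  isChain := h.isChain.tail
  nodup := h.nodup.of_cons
  finished_subset := insert_subset (h.mem_stack v List.mem_cons_self).1 h.finished_subset
  unvisited_subset := h.unvisited_subset
  mem_stack x hx := by
    obtain ⟨hW, hT, hU⟩ := h.mem_stack x (List.mem_cons_of_mem _ hx)
    refine ⟨hW, ?_, hU⟩
    rw [mem_insert, not_or]
    exact ⟨fun hxv => (List.nodup_cons.1 h.nodup).1 (hxv ▸ hx), hT⟩
  card_add_length_add_card := by
    have := h.card_add_length_add_card
    rw [card_insert_of_notMem (h.mem_stack v List.mem_cons_self).2.1]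
    simp only [List.length_cons] at this
    omega
  isCompleteBetween_compl x hx y hy := by
    obtain rfl | hx := mem_insert.1 hx
    · exact (compl_adj _ _ _).2 ⟨fun hxy => (h.mem_stack x List.mem_cons_self).2.2 (hxy ▸ hy),
        hv y hy⟩
    · exact h.isCompleteBetween_compl hx hy

theorem IsDFSState.exists_isCompleteBetween_compl
    (hR : ∀ u v (p : R.Walk u v), p.IsPath → p.length ≠ n) {m : ℕ} {T U : Finset V}
    {l : List V} (h : R.IsDFSState W T U l) (hT : #T ≤ m) (hm : m ≤ #W) :
    ∃ T' U' : Finset V, T' ⊆ W ∧ U' ⊆ W ∧ #T' = m ∧ #W ≤ m + n + #U' ∧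
      Rᶜ.IsCompleteBetween T' U' := by
  obtain hTm | hTm := hT.eq_or_lt
  · have := h.card_add_length_add_card
    have := length_le_of_isChain_of_nodup hR h.isChain h.nodup
    exact ⟨T, U, h.finished_subset, h.unvisited_subset, hTm, by omega, h.isCompleteBetween_compl⟩
  match l, h with
  | [], h =>
    obtain ⟨u, hu⟩ : U.Nonempty := by
      have := h.card_add_length_add_card
      rw [← card_pos]
      simp only [List.length_nil] at this
      omega
    exact (h.push hu (by simp)).exists_isCompleteBetween_compl hR hT hm
  | v :: l, h =>
    by_cases hv : ∃ u ∈ U, R.Adj v u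
    · obtain ⟨u, hu, hvu⟩ := hv
      exact (h.push hu (by simpa using hvu.symm)).exists_isCompleteBetween_compl hR hT hm
    · push Not at hv
      refine (h.pop hv).exists_isCompleteBetween_compl hR ?_ hm
      rw [card_insert_of_notMem (h.mem_stack v List.mem_cons_self).2.1]
      omega
termination_by 2 * #U + l.length
decreasing_by
  all_goals simp only [List.length_cons, List.length_nil]
  all_goals first | omega | (rw [card_erase_of_mem hu]; have := card_pos.2 ⟨u, hu⟩; omega)

theorem exists_isCompleteBetween_compl (hR : ∀ u v (p : R.Walk u v), p.IsPath → p.length ≠ n)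
    {m : ℕ} (W : Finset V) (hm : m ≤ #W) :
    ∃ T U : Finset V, T ⊆ W ∧ U ⊆ W ∧ #T = m ∧ #W ≤ m + n + #U ∧ Rᶜ.IsCompleteBetween T U :=
  IsDFSState.exists_isCompleteBetween_compl hR (T := ∅) (U := W) (l := [])
    { isChain := .nil
      nodup := List.nodup_nil
      finished_subset := empty_subset W
      unvisited_subset := subset_rfl
      mem_stack := by simp
      card_add_length_add_card := by simp
      isCompleteBetween_compl := by simp [IsCompleteBetween] }
    (by simp) hm

theorem exists_pairwise_isCompleteBetween_compl
    (hR : ∀ u v (p : R.Walk u v), p.IsPath → p.length ≠ n) {m : ℕ} :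
    ∀ (k : ℕ) (W : Finset V), k * (m + n) ≤ #W + n →
      ∃ A : Fin k → Finset V, (∀ i, A i ⊆ W) ∧ (∀ i, #(A i) = m) ∧
        Pairwise fun i j => Rᶜ.IsCompleteBetween (A i) (A j)
  | 0, _, _ => ⟨Fin.elim0, fun i => i.elim0, fun i => i.elim0, fun i => i.elim0⟩
  | k + 1, W, hW => by
    rw [add_mul, one_mul] at hW
    obtain ⟨T, U, hTW, hUW, hT, hU, hTU⟩ := exists_isCompleteBetween_compl hR (m := m) W (by omega)
    obtain ⟨A, hAU, hA, hApair⟩ :=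
      exists_pairwise_isCompleteBetween_compl hR (m := m) k U (by omega)
    refine ⟨Fin.cons T A, Fin.forall_fin_succ.2 ⟨hTW, fun i => (hAU i).trans hUW⟩,
      Fin.forall_fin_succ.2 ⟨hT, hA⟩, ?_⟩
    have : Std.Symm fun s t : Finset V => Rᶜ.IsCompleteBetween s t := ⟨fun _ _ h => h.symm⟩
    exact Pairwise.fin_cons (r := fun s t : Finset V => Rᶜ.IsCompleteBetween s t)
      (fun i _ hx _ hy => hTU hx (hAU i hy)) hApair

end SimpleGraph

def redGraph {V : Type*} (G : SimpleGraph V) (c : Sym2 V → Bool) : SimpleGraph V :=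
  G.deleteEdges {e | c e = false}

theorem redPathLen_of_isPath {V : Type*} {G : SimpleGraph V} {c : Sym2 V → Bool} {u v : V}
    (p : (redGraph G c).Walk u v) (hp : p.IsPath) : RedPathLen G c p.length := by
  have hred : ∀ e ∈ p.edges, e ∈ G.edgeSet ∧ c e = true := fun e he => by
    simpa [redGraph] using p.edges_subset_edgeSet he
  exact ⟨u, v, p.transfer G fun e he => (hred e he).1, hp.transfer _, p.length_transfer _,
    fun e he => (hred e (by rwa [Walk.edges_transfer] at he)).2⟩

theorem blueClique_of_adj {V : Type*} {G : SimpleGraph V} {c : Sym2 V → Bool} {m : ℕ}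
    (f : Fin m → V) (hf : ∀ i j, i ≠ j → G.Adj (f i) (f j) ∧ (redGraph G c)ᶜ.Adj (f i) (f j)) :
    BlueClique G c m := by
  have hinj : Function.Injective f := fun i j hfij => not_not.1 fun hne => (hf i j hne).2.ne hfij
  refine ⟨⟨f, hinj⟩, fun i j hij => ?_⟩
  obtain ⟨hG, hblue⟩ := hf i j hij
  have hc : c s(f i, f j) = false := by simpa [redGraph, hG, hblue.ne] using hblue
  exact ⟨hG, hc⟩

theorem stmt_18_general {V : Type*} [Fintype V] (G : SimpleGraph V) (r n t : ℕ)
    (hV : Fintype.card V = r * n + t)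
    (hspan : ∀ A : Fin (r + 1) → Finset V,
      (∀ i j, i ≠ j → Disjoint (A i) (A j)) →
      (∀ i, (A i).card = t / (r + 1)) →
      ∃ f : Fin (r + 1) → V, (∀ i, f i ∈ A i) ∧
        ∀ i j, i ≠ j → G.Adj (f i) (f j)) :
    ∀ c : Sym2 V → Bool, BlueClique G c (r + 1) ∨ RedPathLen G c n := by
  classical
  intro c
  refine or_iff_not_imp_right.2 fun hred => ?_
  have hR : ∀ u v (p : (redGraph G c).Walk u v), p.IsPath → p.length ≠ n :=
    fun u v p hp hlen => hred (hlen ▸ redPathLen_of_isPath p hp)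
  have hcard : (r + 1) * (t / (r + 1) + n) ≤ #(univ : Finset V) + n := by
    have := Nat.div_mul_le_self t (r + 1)
    rw [card_univ, hV]
    nlinarith
  obtain ⟨A, -, hA, hApair⟩ := exists_pairwise_isCompleteBetween_compl hR (r + 1) univ hcard
  obtain ⟨f, hfA, hfG⟩ :=
    hspan A (fun i j hij => disjoint_coe.1 (hApair hij).disjoint) hA
  exact blueClique_of_adj f fun i j hij => ⟨hfG i j hij, hApair hij (hfA i) (hfA j)⟩

theorem stmt_18 {V : Type*} [Fintype V] (G : SimpleGraph V) (r n t : ℕ)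
    (hr : 2 ≤ r) (hn : 0 < n) (ht : 0 < t)
    (hV : Fintype.card V = r * n + t)
    (hspan : ∀ A : Fin (r + 1) → Finset V,
      (∀ i j, i ≠ j → Disjoint (A i) (A j)) →
      (∀ i, (A i).card = t / (r + 1)) →
      ∃ f : Fin (r + 1) → V, (∀ i, f i ∈ A i) ∧
        ∀ i j, i ≠ j → G.Adj (f i) (f j)) :
    ∀ c : Sym2 V → Bool, BlueClique G c (r + 1) ∨ RedPathLen G c n :=
  stmt_18_general G r n t hV hspan
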